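/- arXiv:2101.10296 — 3 statements merged into one kernel-verified Lean document; each statement's English description precedes it below -/
import Mathlib

section
/- Let n ≥ 1, p ≥ 1, let f : (Fin n → Fin 2) → ℝ, let a be a permutation of Fin n that is a symmetry of f (f(a·x) = f(x) for all bitstrings x), and let A be the permutation unitary induced by a. Then for all parameters β, γ : Fin p → ℝ, the depth-p QAOA state is invariant under A: A |β,γ⟩ = |β,γ⟩. -/
open scoped Classical
open Matrix

namespace QAOA

/-- Bitstrings on `n` bits: the computational basis index set. -/
abbrev Bit (n : ℕ) := Fin n → Fin 2

/-- Pauli-Z on qubit `j`: diagonal with entries `(-1)^(x j)`. -/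
noncomputable def Zop (n : ℕ) (j : Fin n) : Matrix (Bit n) (Bit n) ℂ :=
  Matrix.diagonal fun x => (-1 : ℂ) ^ (x j : ℕ)

/-- Flip bit `j` of bitstring `x`. -/
def flip {n : ℕ} (x : Bit n) (j : Fin n) : Bit n := Function.update x j (1 - x j)

/-- Pauli-X on qubit `j`. -/
noncomputable def Xop (n : ℕ) (j : Fin n) : Matrix (Bit n) (Bit n) ℂ :=
  Matrix.of fun x y => if y = flip x j then 1 else 0

/-- The Z-product observable `Z_S = ∏_{j ∈ S} Z_j`. -/
noncomputable def Zprod (n : ℕ) (S : Finset (Fin n)) : Matrix (Bit n) (Bit n) ℂ :=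
  (S.toList.map (Zop n)).prod

/-- The mixing Hamiltonian `B = ∑ j, X_j`. -/
noncomputable def mixB (n : ℕ) : Matrix (Bit n) (Bit n) ℂ := ∑ j, Xop n j

/-- The cost Hamiltonian `H(f)`, diagonal with entries `f x`. -/
noncomputable def costH (n : ℕ) (f : Bit n → ℝ) : Matrix (Bit n) (Bit n) ℂ :=
  Matrix.diagonal fun x => (f x : ℂ)

/-- The uniform superposition `|s⟩`, all entries `2^(-n/2)`. -/
noncomputable def uniform (n : ℕ) : Bit n → ℂ := fun _ => (((2 : ℝ) ^ (-(n : ℝ) / 2) : ℝ) : ℂ)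

/-- The depth-`p` QAOA state
`|β,γ⟩ = exp(-i β_p B) exp(-i γ_p H(f)) ⋯ exp(-i β_1 B) exp(-i γ_1 H(f)) |s⟩`. -/
noncomputable def qaoaState (n p : ℕ) (f : Bit n → ℝ) (β γ : Fin p → ℝ) : Bit n → ℂ :=
  ((List.finRange p).map fun k =>
      NormedSpace.exp ((-Complex.I * (β k : ℂ)) • mixB n) *
      NormedSpace.exp ((-Complex.I * (γ k : ℂ)) • costH n f)).reverse.prod *ᵥ uniform n

/-- The expectation `⟨ψ|M|ψ⟩ = ∑ x, conj (ψ x) * (M ψ) x`. -/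
noncomputable def expectation {n : ℕ} (M : Matrix (Bit n) (Bit n) ℂ) (ψ : Bit n → ℂ) : ℂ :=
  ∑ x, star (ψ x) * (M *ᵥ ψ) x

/-- The action of a permutation of qubit indices on bitstrings: `(a·x) j = x (a⁻¹ j)`. -/
def permAct {n : ℕ} (a : Equiv.Perm (Fin n)) (x : Bit n) : Bit n := fun j => x (a⁻¹ j)

/-- The permutation unitary induced by `a`: `A x y = 1` iff `x = a·y`. -/
noncomputable def permMat {n : ℕ} (a : Equiv.Perm (Fin n)) : Matrix (Bit n) (Bit n) ℂ :=
  Matrix.of fun x y => if x = permAct a y then 1 else 0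

/-! The permutation unitary `A` maps each factor `exp(-i β B)`, `exp(-i γ H(f))` of the QAOA
circuit to itself under conjugation: relabelling qubits permutes the summands `X_j` of `B`, and
`H(f)` is invariant because `a` is a symmetry of `f`. So `A` commutes with the whole circuit, and
it fixes the uniform superposition `|s⟩`, which has constant entries. -/

section PermAct

variable {n : ℕ} (a : Equiv.Perm (Fin n))

lemma permAct_inv_permAct (x : Bit n) : permAct a⁻¹ (permAct a x) = x := by
  funext j; simp [permAct]

lemma permAct_permAct_inv (x : Bit n) : permAct a (permAct a⁻¹ x) = x := by
  funext j; simp [permAct]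

lemma eq_permAct_iff (x y : Bit n) : x = permAct a y ↔ permAct a⁻¹ x = y := by
  constructor
  · rintro rfl; exact permAct_inv_permAct a y
  · rintro rfl; exact (permAct_permAct_inv a x).symm

lemma permAct_injective : Function.Injective (permAct a) :=
  Function.LeftInverse.injective (permAct_inv_permAct a)

lemma permAct_flip (x : Bit n) (j : Fin n) :
    permAct a (flip x j) = flip (permAct a x) (a j) := by
  funext k
  by_cases hk : k = a j
  · subst hk
    simp [permAct, flip]
  · have hk' : a⁻¹ k ≠ j := fun h => hk (by simp [← h])
    simp only [permAct, flip, Function.update_of_ne hk, Function.update_of_ne hk']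

end PermAct

section PermMat

variable {n : ℕ} (a : Equiv.Perm (Fin n))

lemma permMat_mul_apply (M : Matrix (Bit n) (Bit n) ℂ) (x y : Bit n) :
    (permMat a * M) x y = M (permAct a⁻¹ x) y := by
  simp [mul_apply, permMat, eq_permAct_iff]

lemma mul_permMat_apply (M : Matrix (Bit n) (Bit n) ℂ) (x y : Bit n) :
    (M * permMat a) x y = M x (permAct a y) := by
  simp [mul_apply, permMat]

lemma permMat_mulVec_apply (v : Bit n → ℂ) (x : Bit n) :
    (permMat a *ᵥ v) x = v (permAct a⁻¹ x) := by
  simp [mulVec, dotProduct, permMat, eq_permAct_iff]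

lemma commute_permMat_of_apply_permAct {M : Matrix (Bit n) (Bit n) ℂ}
    (hM : ∀ x y, M (permAct a x) (permAct a y) = M x y) :
    Commute (permMat a) M := by
  ext x y
  rw [permMat_mul_apply, mul_permMat_apply, ← hM, permAct_permAct_inv]

lemma commute_permMat_costH {f : Bit n → ℝ} (hf : ∀ x, f (permAct a x) = f x) :
    Commute (permMat a) (costH n f) :=
  commute_permMat_of_apply_permAct a fun x y => by
    simp [costH, diagonal_apply, (permAct_injective a).eq_iff, hf]

lemma Xop_apply_permAct (j : Fin n) (x y : Bit n) :
    Xop n (a j) (permAct a x) (permAct a y) = Xop n j x y := by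
  simp [Xop, ← permAct_flip, (permAct_injective a).eq_iff]

lemma commute_permMat_mixB : Commute (permMat a) (mixB n) :=
  commute_permMat_of_apply_permAct a fun x y => by
    simp only [mixB, Matrix.sum_apply]
    rw [← Equiv.sum_comp a]
    simp only [Xop_apply_permAct]

lemma permMat_mulVec_uniform : permMat a *ᵥ uniform n = uniform n := by
  funext x
  rw [permMat_mulVec_apply]
  rfl

end PermMat

lemma mulVec_qaoaState_of_commute {n p : ℕ} {f : Bit n → ℝ} {P : Matrix (Bit n) (Bit n) ℂ}
    (hB : Commute P (mixB n)) (hH : Commute P (costH n f)) (hs : P *ᵥ uniform n = uniform n)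
    (β γ : Fin p → ℝ) :
    P *ᵥ qaoaState n p f β γ = qaoaState n p f β γ := by
  have hcircuit : Commute P ((List.finRange p).map fun k =>
      NormedSpace.exp ((-Complex.I * (β k : ℂ)) • mixB n) *
      NormedSpace.exp ((-Complex.I * (γ k : ℂ)) • costH n f)).reverse.prod := by
    refine Commute.list_prod_right _ _ fun M hM => ?_
    obtain ⟨k, -, rfl⟩ := List.mem_map.mp (List.mem_reverse.mp hM)
    exact ((hB.smul_right _).exp_right).mul_right ((hH.smul_right _).exp_right)
  rw [qaoaState, mulVec_mulVec, hcircuit.eq, ← mulVec_mulVec, hs]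

theorem qaoaState_invariant_general (n p : ℕ)
    (f : Bit n → ℝ) (a : Equiv.Perm (Fin n))
    (hsym : ∀ x : Bit n, f (permAct a x) = f x)
    (β γ : Fin p → ℝ) :
    permMat a *ᵥ qaoaState n p f β γ = qaoaState n p f β γ :=
  mulVec_qaoaState_of_commute (commute_permMat_mixB a) (commute_permMat_costH a hsym)
    (permMat_mulVec_uniform a) β γ

/-- If `a` is a symmetry of `f`, then the QAOA state is invariant
under the induced permutation unitary: `A |β,γ⟩ = |β,γ⟩`. -/
theorem qaoaState_invariant (n p : ℕ) (hn : 1 ≤ n) (hp : 1 ≤ p)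
    (f : Bit n → ℝ) (a : Equiv.Perm (Fin n))
    (hsym : ∀ x : Bit n, f (permAct a x) = f x)
    (β γ : Fin p → ℝ) :
    permMat a *ᵥ qaoaState n p f β γ = qaoaState n p f β γ :=
  qaoaState_invariant_general n p f a hsym β γ

end QAOA
end

section
/- Let n ≥ 1, S ⊆ Fin n, and β ∈ ℝ. Then the conjugation of the Z-product observable Z_S by the mixing operator has support only on the qubits in S: exp(i β B) · Z_S · exp(-i β B) = (∏_{j∈S} exp(i β X_j)) · Z_S · (∏_{j∈S} exp(-i β X_j)), where B = ∑_{j=1}^{n} X_j. In particular, the factors exp(-i β X_j) with j ∉ S commute through Z_S and cancel. -/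
open scoped Classical
open Matrix

namespace QAOA

/-!
The `X_j` pairwise commute, so `exp (iβB)` factors as `exp (iβB_S) exp (iβB_{Sᶜ})`, where
`B_T = ∑_{j ∈ T} X_j`. For `j ∉ S`, `X_j` flips a bit on which the diagonal matrix `Z_S` does not
depend, so `B_{Sᶜ}` commutes with `Z_S` and its two exponentials cancel in the conjugation.
Finally `exp (iβB_S)` is the product of the commuting factors `exp (iβX_j)`.
-/

open NormedSpace

theorem _root_.Matrix.exp_add_mul_mul_exp_neg_add_of_commute {m 𝔸 : Type*} [Fintype m]
    [DecidableEq m] [NormedRing 𝔸] [NormedAlgebra ℚ 𝔸] [CompleteSpace 𝔸] {a b z : Matrix m m 𝔸}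
    (hab : Commute a b) (hbz : Commute b z) :
    exp (a + b) * z * exp (-(a + b)) = exp a * z * exp (-a) := by
  have hcancel : exp b * exp (-b) = 1 := by
    rw [← Matrix.exp_add_of_commute _ _ (Commute.refl b).neg_right, add_neg_cancel, exp_zero]
  rw [Matrix.exp_add_of_commute _ _ hab, neg_add_rev,
    Matrix.exp_add_of_commute _ _ hab.symm.neg_left.neg_right]
  calc exp a * exp b * z * (exp (-b) * exp (-a))
      = exp a * (exp b * z * exp (-b)) * exp (-a) := by simp only [mul_assoc]
    _ = exp a * z * exp (-a) := by rw [hbz.exp_left.eq, mul_assoc z, hcancel, mul_one]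

theorem _root_.Finset.noncommProd_eq_prod_map_toList {α β : Type*} [Monoid β] (s : Finset α)
    (f : α → β) (comm) :
    s.noncommProd f comm = (s.toList.map f).prod := by
  rw [← Multiset.noncommProd_coe _
    (by rw [← Multiset.map_coe, Finset.coe_toList]; exact Finset.noncommProd_lemma s f comm)]
  simp only [Finset.noncommProd, ← Multiset.map_coe, Finset.coe_toList]

section Pauli

variable {n : ℕ}

theorem flip_apply_of_ne (x : Bit n) {j k : Fin n} (h : k ≠ j) : flip x j k = x k :=
  Function.update_of_ne h _ _

theorem flip_flip_comm (x : Bit n) (j k : Fin n) : flip (flip x j) k = flip (flip x k) j := by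
  rcases eq_or_ne j k with rfl | h
  · rfl
  · simp only [flip, Function.update_of_ne h.symm, Function.update_of_ne h, Function.update_comm h]

theorem Xop_mul_Xop (j k : Fin n) :
    Xop n j * Xop n k = of fun x y => if y = flip (flip x j) k then 1 else 0 := by
  ext x y
  simp only [Xop, mul_apply, of_apply, ite_mul, one_mul, zero_mul]
  rw [Finset.sum_ite_eq']
  simp

theorem Xop_commute (j k : Fin n) : Commute (Xop n j) (Xop n k) := by
  simp only [Commute, SemiconjBy, Xop_mul_Xop, flip_flip_comm]

theorem Zprod_eq_diagonal (S : Finset (Fin n)) :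
    Zprod n S = diagonal fun x => ∏ j ∈ S, (-1 : ℂ) ^ (x j : ℕ) := by
  calc Zprod n S
      = diagonalRingHom _ ℂ ((S.toList.map fun j (x : Bit n) => (-1 : ℂ) ^ (x j : ℕ)).prod) := by
        rw [map_list_prod, List.map_map]; rfl
    _ = _ := by
        rw [Finset.prod_map_toList]
        exact congrArg diagonal (Finset.prod_fn _ _)

theorem diagonal_commute_Xop {d : Bit n → ℂ} {j : Fin n} (hd : ∀ x, d (flip x j) = d x) :
    Commute (diagonal d) (Xop n j) := by
  ext x y
  simp only [diagonal_mul, mul_diagonal, Xop, of_apply]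
  split_ifs with h
  · rw [h, hd, mul_one, one_mul]
  · rw [mul_zero, zero_mul]

theorem Zprod_commute_Xop {S : Finset (Fin n)} {j : Fin n} (hj : j ∉ S) :
    Commute (Zprod n S) (Xop n j) := by
  rw [Zprod_eq_diagonal]
  refine diagonal_commute_Xop fun x => Finset.prod_congr rfl fun k hk => ?_
  rw [flip_apply_of_ne x (ne_of_mem_of_not_mem hk hj)]

theorem exp_sum_smul_Xop (c : ℂ) (S : Finset (Fin n)) :
    exp (∑ j ∈ S, c • Xop n j) = (S.toList.map fun j => exp (c • Xop n j)).prod := by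
  have hcomm : (S : Set (Fin n)).Pairwise (Function.onFun Commute fun j => c • Xop n j) :=
    fun j _ k _ _ => ((Xop_commute j k).smul_left c).smul_right c
  exact (Matrix.exp_sum_of_commute _ _ hcomm).trans (Finset.noncommProd_eq_prod_map_toList _ _ _)

theorem smul_mixB_eq_add (c : ℂ) (S : Finset (Fin n)) :
    c • mixB n = ∑ j ∈ S, c • Xop n j + ∑ j ∈ Sᶜ, c • Xop n j := by
  rw [Finset.sum_add_sum_compl, mixB, Finset.smul_sum]

end Pauli

theorem mixer_conj_support_general (n : ℕ) (S : Finset (Fin n)) (β : ℝ) :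
    NormedSpace.exp ((Complex.I * (β : ℂ)) • mixB n) * Zprod n S *
        NormedSpace.exp ((-Complex.I * (β : ℂ)) • mixB n) =
      (S.toList.map fun j => NormedSpace.exp ((Complex.I * (β : ℂ)) • Xop n j)).prod *
          Zprod n S *
        (S.toList.map fun j => NormedSpace.exp ((-Complex.I * (β : ℂ)) • Xop n j)).prod := by
  rw [neg_mul]
  set c := Complex.I * (β : ℂ)
  have hXX : Commute (∑ j ∈ S, c • Xop n j) (∑ k ∈ Sᶜ, c • Xop n k) :=
    .sum_left _ _ _ fun j _ => .sum_right _ _ _ fun k _ =>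
      ((Xop_commute j k).smul_left c).smul_right c
  have hXZ : Commute (∑ k ∈ Sᶜ, c • Xop n k) (Zprod n S) :=
    .sum_left _ _ _ fun k hk => ((Zprod_commute_Xop (Finset.mem_compl.mp hk)).symm.smul_left c)
  rw [neg_smul, smul_mixB_eq_add c S, Matrix.exp_add_mul_mul_exp_neg_add_of_commute hXX hXZ,
    ← Finset.sum_neg_distrib]
  simp only [← neg_smul, exp_sum_smul_Xop]

/-- Conjugating `Z_S` by the mixing operator only involves the qubits
in `S`: the factors `exp(-i β X_j)` with `j ∉ S` commute through and cancel. -/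
theorem mixer_conj_support (n : ℕ) (hn : 1 ≤ n) (S : Finset (Fin n)) (β : ℝ) :
    NormedSpace.exp ((Complex.I * (β : ℂ)) • mixB n) * Zprod n S *
        NormedSpace.exp ((-Complex.I * (β : ℂ)) • mixB n) =
      (S.toList.map fun j => NormedSpace.exp ((Complex.I * (β : ℂ)) • Xop n j)).prod *
          Zprod n S *
        (S.toList.map fun j => NormedSpace.exp ((-Complex.I * (β : ℂ)) • Xop n j)).prod :=
  mixer_conj_support_general n S β

end QAOA
end

section
/- Let G be a finite simple graph on vertex set Fin n, let σ be a graph automorphism of G, and let {u, v} be an edge of G. Then for the depth-p MaxCut QAOA state (the QAOA state for the cost function f = cut), for all p ≥ 1 and all parameters β, γ : Fin p → ℝ, the two-point correlations of the edge and its image under σ coincide: ⟨β,γ| Z_u Z_v |β,γ⟩ = ⟨β,γ| Z_{σ u} Z_{σ v} |β,γ⟩. -/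
open scoped Classical
open Matrix

namespace QAOA

/-- The MaxCut objective: the number of edges `{u,v}` of `G` with `x u ≠ x v`. -/
noncomputable def cut {n : ℕ} (G : SimpleGraph (Fin n)) (x : Bit n) : ℕ :=
  (G.edgeFinset.filter fun e =>
    Sym2.lift ⟨fun u v => x u ≠ x v, fun u v => by simp [ne_comm]⟩ e).card

end QAOA

/-!
A graph automorphism `σ` relabels the qubits. Conjugating by the induced permutation unitary fixes
the mixer `B = ∑ j, X_j` (it only permutes the summands) and the cost Hamiltonian (`cut` is
`σ`-invariant), hence every layer `exp (-i β B) exp (-i γ H)`; as `|s⟩` is permutation invariant,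
the QAOA state is invariant too. The same conjugation carries `Z_{σ u} Z_{σ v}` to `Z_u Z_v`.
-/

open NormedSpace

theorem AlgEquiv.map_exp_of_continuous {𝕜 𝔸 𝔹 : Type*} [Field 𝕜] [CharZero 𝕜] [Ring 𝔸] [Ring 𝔹]
    [Algebra 𝕜 𝔸] [Algebra 𝕜 𝔹] [TopologicalSpace 𝔸] [TopologicalSpace 𝔹]
    [IsTopologicalRing 𝔸] [IsTopologicalRing 𝔹] [T2Space 𝔸] [T2Space 𝔹]
    (Φ : 𝔸 ≃ₐ[𝕜] 𝔹) (hΦ : Continuous Φ) (hΦsymm : Continuous Φ.symm) (x : 𝔸) :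
    Φ (exp x) = exp (Φ x) := by
  let L : 𝔸 ≃L[𝕜] 𝔹 := ⟨Φ.toLinearEquiv, hΦ, hΦsymm⟩
  simp only [exp_eq_tsum 𝕜]
  exact L.map_tsum.trans (tsum_congr fun k => by rw [map_smul]; exact congrArg _ (map_pow Φ x k))

namespace QAOA

variable {n : ℕ}

/-- `permAct σ` as an equivalence of bitstrings. -/
def permActEquiv (σ : Equiv.Perm (Fin n)) : Bit n ≃ Bit n :=
  Equiv.arrowCongr σ (Equiv.refl (Fin 2))

@[simp]
lemma permActEquiv_apply (σ : Equiv.Perm (Fin n)) (x : Bit n) (j : Fin n) :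
    permActEquiv σ x j = x (σ.symm j) := rfl

lemma permActEquiv_flip (σ : Equiv.Perm (Fin n)) (x : Bit n) (j : Fin n) :
    permActEquiv σ (flip x j) = flip (permActEquiv σ x) (σ j) := by
  funext k
  rcases eq_or_ne k (σ j) with rfl | hk
  · simp [flip]
  · simp [flip, hk, σ.symm_apply_eq.not.mpr hk]

/-- Conjugation `M ↦ (permMat σ)⁻¹ * M * permMat σ` by the qubit-permutation unitary. -/
noncomputable def permConj (σ : Equiv.Perm (Fin n)) :
    Matrix (Bit n) (Bit n) ℂ ≃ₐ[ℂ] Matrix (Bit n) (Bit n) ℂ :=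
  reindexAlgEquiv ℂ ℂ (permActEquiv σ).symm

lemma permConj_apply (σ : Equiv.Perm (Fin n)) (M : Matrix (Bit n) (Bit n) ℂ) :
    permConj σ M = M.submatrix (permActEquiv σ) (permActEquiv σ) := rfl

lemma permConj_exp (σ : Equiv.Perm (Fin n)) (M : Matrix (Bit n) (Bit n) ℂ) :
    permConj σ (exp M) = exp (permConj σ M) :=
  (permConj σ).map_exp_of_continuous (continuous_id.matrix_reindex _ _)
    (continuous_id.matrix_reindex _ _) M

lemma permConj_Zop (σ : Equiv.Perm (Fin n)) (j : Fin n) :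
    permConj σ (Zop n (σ j)) = Zop n j := by
  simp [permConj_apply, Zop, submatrix_diagonal_equiv, Function.comp_def]

lemma permConj_Xop (σ : Equiv.Perm (Fin n)) (j : Fin n) :
    permConj σ (Xop n (σ j)) = Xop n j := by
  ext x y
  simp [permConj_apply, Xop, ← permActEquiv_flip, (permActEquiv σ).apply_eq_iff_eq]

lemma permConj_mixB (σ : Equiv.Perm (Fin n)) : permConj σ (mixB n) = mixB n := by
  conv_lhs => rw [mixB, ← Equiv.sum_comp σ, map_sum]
  simp only [permConj_Xop, mixB]

lemma permConj_costH (σ : Equiv.Perm (Fin n)) (f : Bit n → ℝ) :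
    permConj σ (costH n f) = costH n (f ∘ permActEquiv σ) := by
  simp [permConj_apply, costH, submatrix_diagonal_equiv, Function.comp_def]

noncomputable def qaoaUnitary (n p : ℕ) (f : Bit n → ℝ) (β γ : Fin p → ℝ) :
    Matrix (Bit n) (Bit n) ℂ :=
  ((List.finRange p).map fun k =>
      exp ((-Complex.I * (β k : ℂ)) • mixB n) *
      exp ((-Complex.I * (γ k : ℂ)) • costH n f)).reverse.prod

lemma qaoaState_eq_mulVec (p : ℕ) (f : Bit n → ℝ) (β γ : Fin p → ℝ) :
    qaoaState n p f β γ = qaoaUnitary n p f β γ *ᵥ uniform n := rfl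

lemma permConj_qaoaUnitary {p : ℕ} {f : Bit n → ℝ} {σ : Equiv.Perm (Fin n)}
    (hf : ∀ x, f (permActEquiv σ x) = f x) (β γ : Fin p → ℝ) :
    permConj σ (qaoaUnitary n p f β γ) = qaoaUnitary n p f β γ := by
  simp only [qaoaUnitary, ← List.map_reverse, map_list_prod, List.map_map, Function.comp_def,
    map_mul, permConj_exp, map_smul, permConj_mixB, permConj_costH, hf]

lemma qaoaState_comp_permActEquiv {p : ℕ} {f : Bit n → ℝ} {σ : Equiv.Perm (Fin n)}
    (hf : ∀ x, f (permActEquiv σ x) = f x) (β γ : Fin p → ℝ) :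
    qaoaState n p f β γ ∘ permActEquiv σ = qaoaState n p f β γ := by
  calc qaoaState n p f β γ ∘ permActEquiv σ
      = (qaoaUnitary n p f β γ).submatrix (permActEquiv σ) (permActEquiv σ) *ᵥ uniform n := by
        rw [qaoaState_eq_mulVec, submatrix_mulVec_equiv]; rfl
    _ = qaoaState n p f β γ := by
        rw [← permConj_apply, permConj_qaoaUnitary hf, qaoaState_eq_mulVec]

lemma expectation_submatrix (M : Matrix (Bit n) (Bit n) ℂ) (ψ : Bit n → ℂ) (e : Bit n ≃ Bit n) :
    expectation (M.submatrix e e) (ψ ∘ e) = expectation M ψ := by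
  simp only [expectation, submatrix_mulVec_equiv, Function.comp_assoc, Equiv.self_comp_symm,
    Function.comp_id, Function.comp_apply]
  exact e.sum_comp (fun x => star (ψ x) * (M *ᵥ ψ) x)

lemma cut_permActEquiv (G : SimpleGraph (Fin n)) (σ : Equiv.Perm (Fin n))
    (hauto : ∀ u v, G.Adj (σ u) (σ v) ↔ G.Adj u v) (x : Bit n) :
    cut G (permActEquiv σ x) = cut G x := by
  have hauto_symm : ∀ u v, G.Adj (σ.symm u) (σ.symm v) ↔ G.Adj u v := fun u v => by
    simpa using (hauto (σ.symm u) (σ.symm v)).symm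
  refine Finset.card_nbij' (Sym2.map σ.symm) (Sym2.map σ) ?_ ?_ ?_ ?_ <;> intro e <;>
    induction e using Sym2.ind <;>
    -- `mem_filter` has to fire before `simp` rewrites the filter predicate and its instance
    simp only [Finset.mem_coe, Finset.mem_filter] <;> simp [hauto, hauto_symm]

theorem maxcut_correlation_eq_of_automorphism_general (n p : ℕ)
    (G : SimpleGraph (Fin n)) (σ : Equiv.Perm (Fin n))
    (hauto : ∀ u v, G.Adj (σ u) (σ v) ↔ G.Adj u v)
    (u v : Fin n) (β γ : Fin p → ℝ) :
    expectation (Zop n u * Zop n v)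
        (qaoaState n p (fun x => ((cut G x : ℕ) : ℝ)) β γ) =
      expectation (Zop n (σ u) * Zop n (σ v))
        (qaoaState n p (fun x => ((cut G x : ℕ) : ℝ)) β γ) := by
  set ψ := qaoaState n p (fun x => ((cut G x : ℕ) : ℝ)) β γ
  have hψ : ψ ∘ permActEquiv σ = ψ :=
    qaoaState_comp_permActEquiv (fun x => by rw [cut_permActEquiv G σ hauto]) β γ
  calc expectation (Zop n u * Zop n v) ψ
      = expectation (permConj σ (Zop n (σ u) * Zop n (σ v))) (ψ ∘ permActEquiv σ) := by
        rw [map_mul, permConj_Zop, permConj_Zop, hψ]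
    _ = expectation (Zop n (σ u) * Zop n (σ v)) ψ := expectation_submatrix _ _ _

/-- For MaxCut QAOA, the two-point correlations of an edge and of its
image under a graph automorphism coincide. -/
theorem maxcut_correlation_eq_of_automorphism (n p : ℕ) (hp : 1 ≤ p)
    (G : SimpleGraph (Fin n)) (σ : Equiv.Perm (Fin n))
    (hauto : ∀ u v, G.Adj (σ u) (σ v) ↔ G.Adj u v)
    (u v : Fin n) (he : G.Adj u v) (β γ : Fin p → ℝ) :
    expectation (Zop n u * Zop n v)
        (qaoaState n p (fun x => ((cut G x : ℕ) : ℝ)) β γ) =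
      expectation (Zop n (σ u) * Zop n (σ v))
        (qaoaState n p (fun x => ((cut G x : ℕ) : ℝ)) β γ) :=
  maxcut_correlation_eq_of_automorphism_general n p G σ hauto u v β γ

end QAOA
end
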